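/- Fix d ≥ 2, p ∈ (0,1] and λ ∈ [0,1]. For every nearest-neighbor edge e of Z^d, the marginal probability that e is open in the independent alignment percolation model equals λ: ℙ_{p,λ,d}(σ(e) = 1) = λ. -/

import Mathlib

open MeasureTheory ENNReal

namespace AlignmentPercolation

/-- Sites of the lattice `ℤ^d`. -/
abbrev Site (d : ℕ) := Fin d → ℤ

/-- A site configuration: `true` means occupied. -/
abbrev SiteCfg (d : ℕ) := Site d → Bool

/-- Labels (open/closed) attached to (potential) segments, indexed by their ordered
pair of endpoints. -/
abbrev PairLabels (d : ℕ) := Site d × Site d → Bool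

/-- A configuration of the independent alignment percolation model: a site
configuration together with independent labels for the segments. -/
abbrev Cfg (d : ℕ) := SiteCfg d × PairLabels d

/-- Nearest-neighbour edges of `ℤ^d`, indexed by their lower endpoint and direction:
`(u, i)` is the edge from `u` to `u + e_i`. -/
abbrev EdgeIdx (d : ℕ) := Site d × Fin d

/-- The point obtained from `u` by replacing its `i`-th coordinate with `a`. -/
def seg {d : ℕ} (u : Site d) (i : Fin d) (a : ℤ) : Site d := Function.update u i a

/-- The point `u + e_i`. -/
def up {d : ℕ} (u : Site d) (i : Fin d) : Site d := seg u i (u i + 1)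

/-- The skewed doubling map underlying the construction of an i.i.d.
Bernoulli(p) sequence from a single uniform random variable on `[0,1)`. -/
noncomputable def bernShift (p : ℝ) (x : ℝ) : ℝ :=
  if x < p then x / p else (x - p) / (1 - p)

open scoped Classical in
noncomputable def bernDigit (p : ℝ) (x : ℝ) : Bool := if x < p then true else false

/-- The sequence of skewed binary digits of `x`; under the uniform distribution on
`[0,1)` this is an i.i.d. Bernoulli(p) sequence. -/
noncomputable def bernDigits (p : ℝ) (x : ℝ) : ℕ → Bool :=
  fun n => bernDigit p ((bernShift p)^[n] x)

/-- The i.i.d. Bernoulli(p) product probability measure on `ι → Bool`, for a countable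
index type `ι`: the law of the family of skewed binary digits (indexed through an
injection `ι ↪ ℕ`) of a uniform random variable on `[0,1)`. Each coordinate is `true`
with probability `p` (with the convention that `p` is clamped to `[0,1]`). -/
noncomputable def iidBool (ι : Type*) [Countable ι] (p : ℝ) : Measure (ι → Bool) :=
  Measure.map (fun f (i : ι) => f ((Countable.exists_injective_nat ι).choose i))
    (Measure.map (bernDigits p) (volume.restrict (Set.Ico (0 : ℝ) 1)))

/-- The law `ℙ_{p,λ,d}` of the independent alignment percolation model: sites are
occupied independently with probability `p`, and independently every potential
segment carries an independent Bernoulli(λ) label. -/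
noncomputable def alignMeasure (d : ℕ) (p lam : ℝ) : Measure (Cfg d) :=
  (iidBool (Site d) p).prod (iidBool (Site d × Site d) lam)

/-- `(v, w)` is a feasible pair of the site configuration `ω` (ordered so that the
coordinate where they differ increases): `v` and `w` differ in exactly one
coordinate, are both occupied, and no site strictly between them is occupied. -/
def FeasiblePair {d : ℕ} (ω : SiteCfg d) (v w : Site d) : Prop :=
  ∃ i : Fin d, (∀ j, j ≠ i → v j = w j) ∧ v i < w i ∧
    ω v = true ∧ ω w = true ∧ ∀ c : ℤ, v i < c → c < w i → ω (seg v i c) = false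

/-- The edge `e` lies on the axis-parallel segment with endpoints `v` and `w`. -/
def EdgeOnSeg {d : ℕ} (e : EdgeIdx d) (v w : Site d) : Prop :=
  ∃ a b : ℤ, a ≤ e.1 e.2 ∧ e.1 e.2 < b ∧ v = seg e.1 e.2 a ∧ w = seg e.1 e.2 b

/-- The edge `e` is open in the configuration `ξ`: it lies on the segment of a
feasible pair whose label is open. -/
def EdgeOpen {d : ℕ} (ξ : Cfg d) (e : EdgeIdx d) : Prop :=
  ∃ v w : Site d, FeasiblePair ξ.1 v w ∧ EdgeOnSeg e v w ∧ ξ.2 (v, w) = true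

/-- The induced edge configuration `σ ∈ {0,1}^{E^d}` (as a `Bool`). -/
noncomputable def edgeState {d : ℕ} (ξ : Cfg d) (e : EdgeIdx d) : Bool :=
  @decide (EdgeOpen ξ e) (Classical.propDecidable _)

/-- The graph on `ℤ^d` whose edges are the open edges of the configuration `ξ`. -/
def openGraph {d : ℕ} (ξ : Cfg d) : SimpleGraph (Site d) where
  Adj u v := ∃ i, (v = up u i ∧ EdgeOpen ξ (u, i)) ∨ (u = up v i ∧ EdgeOpen ξ (v, i))
  symm := by constructor; rintro u v ⟨i, h | h⟩; exacts [⟨i, Or.inr h⟩, ⟨i, Or.inl h⟩]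
  loopless := by
    constructor
    rintro u ⟨i, ⟨h, -⟩ | ⟨h, -⟩⟩ <;>
    · have := congrFun h i
      simp [up, seg] at this

/-- The site `v` lies in an infinite connected component of open edges. -/
def PercolatesFrom {d : ℕ} (ξ : Cfg d) (v : Site d) : Prop :=
  {w | (openGraph ξ).Reachable v w}.Infinite

/-- The set `𝒪` of open edges percolates. -/
def Percolates {d : ℕ} (ξ : Cfg d) : Prop := ∃ v, PercolatesFrom ξ v

/-- `θ(p,λ,d)`: the probability that the origin lies in an infinite open cluster. -/
noncomputable def theta (d : ℕ) (p lam : ℝ) : ℝ≥0∞ :=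
  alignMeasure d p lam {ξ | PercolatesFrom ξ 0}

/-- `ℙ_{p,λ,d}(𝒪 percolates)`. -/
noncomputable def percProb (d : ℕ) (p lam : ℝ) : ℝ≥0∞ :=
  alignMeasure d p lam {ξ | Percolates ξ}

/-- The critical segment parameter `λ_c(p,d) = sup {λ ≥ 0 : θ(p,λ,d) = 0}`. -/
noncomputable def lambdaC (d : ℕ) (p : ℝ) : ℝ :=
  sSup {lam : ℝ | 0 ≤ lam ∧ theta d p lam = 0}

/-- A configuration of Bernoulli bond percolation on `ℤ^d`. -/
abbrev BondCfg (d : ℕ) := EdgeIdx d → Bool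

/-- Independent Bernoulli(λ) bond percolation on `ℤ^d`. -/
noncomputable def bondMeasure (d : ℕ) (lam : ℝ) : Measure (BondCfg d) :=
  iidBool (EdgeIdx d) lam

/-- The graph of open bonds of a bond configuration. -/
def bondGraph {d : ℕ} (σ : BondCfg d) : SimpleGraph (Site d) where
  Adj u v := ∃ i, (v = up u i ∧ σ (u, i) = true) ∨ (u = up v i ∧ σ (v, i) = true)
  symm := by constructor; rintro u v ⟨i, h | h⟩; exacts [⟨i, Or.inr h⟩, ⟨i, Or.inl h⟩]
  loopless := by
    constructor
    rintro u ⟨i, ⟨h, -⟩ | ⟨h, -⟩⟩ <;>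
    · have := congrFun h i
      simp [up, seg] at this

/-- The percolation function of Bernoulli bond percolation on `ℤ^d`. -/
noncomputable def thetaBond (d : ℕ) (lam : ℝ) : ℝ≥0∞ :=
  bondMeasure d lam {σ | {w | (bondGraph σ).Reachable 0 w}.Infinite}

/-- The critical parameter `p_c^bond(d)` of Bernoulli bond percolation on `ℤ^d`. -/
noncomputable def pcBond (d : ℕ) : ℝ :=
  sSup {lam : ℝ | 0 ≤ lam ∧ thetaBond d lam = 0}

/-- The (closed) sup-norm box `B(x,L)` in `ℤ^d`. -/
def box (d : ℕ) (x : Site d) (L : ℝ) : Set (Site d) :=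
  {z | ∀ i, |((z i - x i : ℤ) : ℝ)| ≤ L}

/-- The sphere `∂B(x,L) = {z : ‖z - x‖_∞ = ⌊L⌋}` in `ℤ^d`. -/
def sphere (d : ℕ) (x : Site d) (L : ℝ) : Set (Site d) :=
  {z | (∀ i, |z i - x i| ≤ ⌊L⌋) ∧ ∃ i, |z i - x i| = ⌊L⌋}

/-- The sup-norm distance `‖x - y‖_∞` on `ℤ^d` (as a natural number). -/
def supDist {d : ℕ} (x y : Site d) : ℕ :=
  Finset.univ.sup fun i => (x i - y i).natAbs

/-- The sequence of scales: `L 0 = 10^4` and `L (k+1) = (L k)^(3/2)`. -/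
noncomputable def Lscale : ℕ → ℝ
  | 0 => 10 ^ 4
  | k + 1 => Lscale k ^ ((3 : ℝ) / 2)

/-- `α(p) = -log (1-p)`. -/
noncomputable def alphaP (p : ℝ) : ℝ := - Real.log (1 - p)

/-- The edge `e` has both endpoints in `B`. -/
def EdgeIn {d : ℕ} (B : Set (Site d)) (e : EdgeIdx d) : Prop :=
  e.1 ∈ B ∧ up e.1 e.2 ∈ B

/-- The event `A` is supported on the edges of `B`: it is measurable with respect to
the σ-algebra generated by the states of the edges with both endpoints in `B`. -/
def SupportedOnEdges {d : ℕ} (B : Set (Site d)) (A : Set (Cfg d)) : Prop :=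
  MeasurableSet[MeasurableSpace.comap
    (fun ξ (e : {e : EdgeIdx d // EdgeIn B e}) => edgeState ξ e.1) inferInstance] A

/-- `S` is a set of points of `T` whose `L`-boxes cover `T`. -/
def IsCover (d : ℕ) (T : Set (Site d)) (L : ℝ) (S : Finset (Site d)) : Prop :=
  ↑S ⊆ T ∧ T ⊆ ⋃ x ∈ S, box d x L

/-- `S` is a cover of `T` by `L`-boxes centred in `T`, of minimal cardinality. -/
def IsMinCover (d : ℕ) (T : Set (Site d)) (L : ℝ) (S : Finset (Site d)) : Prop :=
  IsCover d T L S ∧ ∀ S' : Finset (Site d), IsCover d T L S' → S.card ≤ S'.card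

/-! Almost surely the line through `e` carries occupied sites on both sides of `e`; then exactly
one feasible pair covers `e`, namely the nearest occupied sites below and above it. So `{e open}`
is the disjoint union over pairs `(v, w)` of `{(v, w) covers e} × {(v, w) is labelled open}`. Sites
and labels are independent, every label is open with probability `λ`, and the first factors
partition the site configurations almost surely, so the probability is `λ`.

To compute with `iidBool`, it is identified with Mathlib's product `Measure.infinitePi` of Bernoulli
measures: a uniform point of `[0,1)` splits into its first skewed digit and the rescaled remainder,
which are independent with laws Bernoulli(p) and uniform on `[0,1)`. -/

open Function ProbabilityTheory unitInterval Measure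

local notation "U₀₁" => volume.restrict (Set.Ico (0 : ℝ) 1)

lemma map_restrict_Ico_rescale {a b : ℝ} (hab : a ≤ b) :
    (volume.restrict (Set.Ico a b)).map (fun x => (x - a) / (b - a)) =
      ENNReal.ofReal (b - a) • U₀₁ := by
  rcases hab.eq_or_lt with rfl | hab
  · simp
  have hba : 0 < b - a := sub_pos.mpr hab
  ext A hA
  have hset : (fun x => (x - a) / (b - a)) ⁻¹' A ∩ Set.Ico a b =
      (fun x => x + -a) ⁻¹' ((fun x => x * (b - a)⁻¹) ⁻¹' (A ∩ Set.Ico 0 1)) := by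
    ext x
    simp only [Set.mem_inter_iff, Set.mem_Ico, Set.mem_preimage, ← div_eq_mul_inv,
      ← sub_eq_add_neg, le_div_iff₀ hba, div_lt_one hba]
    constructor <;> rintro ⟨h1, h2, h3⟩ <;> exact ⟨h1, by linarith, by linarith⟩
  rw [Measure.map_apply (by fun_prop) hA, Measure.restrict_apply (by measurability), hset,
    measure_preimage_add_right, Real.volume_preimage_mul_right (inv_ne_zero hba.ne'), inv_inv,
    abs_of_pos hba, Measure.smul_apply, Measure.restrict_apply hA, smul_eq_mul]

lemma measurable_bernShift (p : ℝ) : Measurable (bernShift p) :=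
  Measurable.ite measurableSet_Iio (by fun_prop) (by fun_prop)

lemma measurable_bernDigit (p : ℝ) : Measurable (bernDigit p) :=
  Measurable.ite measurableSet_Iio measurable_const measurable_const

noncomputable def bernSplit (p x : ℝ) : Bool × ℝ := (bernDigit p x, bernShift p x)

lemma measurable_bernSplit (p : ℝ) : Measurable (bernSplit p) :=
  (measurable_bernDigit p).prodMk (measurable_bernShift p)

lemma map_bernSplit_restrict_Ico (p : I) :
    Measure.map (bernSplit p) U₀₁ = Ber(true, false, p).prod U₀₁ := by
  have hp0 : (0 : ℝ) ≤ p := p.2.1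
  have hp1 : (p : ℝ) ≤ 1 := p.2.2
  have hsplit :
      U₀₁ = volume.restrict (Set.Ico 0 (p : ℝ)) + volume.restrict (Set.Ico (p : ℝ) 1) := by
    rw [← Measure.restrict_union (Set.Ico_disjoint_Ico_same) measurableSet_Ico,
      Set.Ico_union_Ico_eq_Ico hp0 hp1]
  have hlow : (volume.restrict (Set.Ico 0 (p : ℝ))).map (bernSplit p) =
      ENNReal.ofReal p • (Measure.dirac true).prod U₀₁ := by
    rw [Measure.map_congr (g := Prod.mk true ∘ fun x => (x - 0) / ((p : ℝ) - 0)),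
      ← Measure.map_map measurable_prodMk_left (by fun_prop), map_restrict_Ico_rescale hp0,
      Measure.map_smul, ← Measure.dirac_prod, sub_zero]
    refine ae_restrict_of_forall_mem measurableSet_Ico fun x hx => ?_
    simp [bernSplit, bernDigit, bernShift, hx.2]
  have hhigh : (volume.restrict (Set.Ico (p : ℝ) 1)).map (bernSplit p) =
      ENNReal.ofReal (1 - p) • (Measure.dirac false).prod U₀₁ := by
    rw [Measure.map_congr (g := Prod.mk false ∘ fun x => (x - p) / (1 - (p : ℝ))),
      ← Measure.map_map measurable_prodMk_left (by fun_prop), map_restrict_Ico_rescale hp1,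
      Measure.map_smul, ← Measure.dirac_prod]
    refine ae_restrict_of_forall_mem measurableSet_Ico fun x hx => ?_
    simp [bernSplit, bernDigit, bernShift, hx.1.not_gt]
  conv_lhs => rw [hsplit]
  rw [Measure.map_add _ _ (measurable_bernSplit p), hlow, hhigh, bernoulliMeasure_def,
    Measure.add_prod, Measure.prod_smul_left, Measure.prod_smul_left]
  congr 2
  · rw [ENNReal.ofReal_eq_coe_nnreal hp0]; rfl
  · rw [ENNReal.ofReal_eq_coe_nnreal (sub_nonneg.2 hp1)]; rfl

lemma bernDigits_succ (p x : ℝ) (n : ℕ) :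
    bernDigits p x (n + 1) = bernDigits p (bernShift p x) n := by
  simp only [bernDigits, Function.iterate_succ_apply]

lemma measurable_bernDigits (p : ℝ) : Measurable (bernDigits p) :=
  measurable_pi_lambda _ fun n => (measurable_bernDigit p).comp ((measurable_bernShift p).iterate n)

lemma restrict_Ico_bernDigits_preimage_pi_range (p : I) (N : ℕ) (t : ℕ → Set Bool) :
    U₀₁ (bernDigits p ⁻¹' Set.pi ↑(Finset.range N) t) =
      ∏ n ∈ Finset.range N, Ber(true, false, p) (t n) := by
  induction N generalizing t with
  | zero => simp
  | succ N ih =>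
    have hset : bernDigits p ⁻¹' Set.pi ↑(Finset.range (N + 1)) t =
        bernSplit p ⁻¹'
          (t 0 ×ˢ (bernDigits p ⁻¹' Set.pi ↑(Finset.range N) fun n => t (n + 1))) := by
      ext x
      simp only [Set.mem_preimage, Set.mem_pi, Finset.coe_range, Set.mem_Iio, Set.mem_prod,
        Nat.forall_lt_succ_left, bernDigits_succ]
      rfl
    rw [hset, ← Measure.map_apply (measurable_bernSplit p) (.prod .of_discrete
        (measurable_bernDigits p (.pi (Set.to_countable _) fun _ _ => .of_discrete))),
      map_bernSplit_restrict_Ico, Measure.prod_prod, ih, Finset.prod_range_succ', mul_comm]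

theorem map_bernDigits_restrict_Ico (p : I) :
    Measure.map (bernDigits p) U₀₁ = infinitePi fun _ => Ber(true, false, p) := by
  refine eq_infinitePi _ fun s t _ => ?_
  obtain ⟨N, hN⟩ := s.exists_nat_subset_range
  have hset :
      Set.pi ↑s t = Set.pi ↑(Finset.range N) fun n => if n ∈ s then t n else Set.univ := by
    ext x
    simp only [Set.mem_pi, Finset.mem_coe]
    refine ⟨fun h n _ => ?_, fun h n hn => by simpa [hn] using h n (hN hn)⟩
    split_ifs with hn
    exacts [h n hn, trivial]
  rw [Measure.map_apply (measurable_bernDigits p)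
      (.pi (Set.to_countable _) fun _ _ => .of_discrete), hset,
    restrict_Ico_bernDigits_preimage_pi_range,
    ← Finset.prod_subset hN fun n _ hn => by simp [hn]]
  exact Finset.prod_congr rfl fun n hn => by simp [hn]

lemma infinitePi_map_comp_of_injective {ι κ X : Type*} [MeasurableSpace X] (ν : Measure X)
    [IsProbabilityMeasure ν] {f : ι → κ} (hf : f.Injective) :
    (infinitePi fun _ : κ => ν).map (fun g => g ∘ f) = infinitePi fun _ : ι => ν := by
  classical
  refine eq_infinitePi _ fun s t ht => ?_
  set t' : κ → Set X := Function.extend f t fun _ => Set.univ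
  have hset : (fun g : κ → X => g ∘ f) ⁻¹' Set.pi ↑s t = Set.pi ↑(s.image f) t' := by
    ext g
    simp [t', hf.extend_apply]
  have ht' : ∀ k ∈ s.image f, MeasurableSet (t' k) := by
    intro k hk
    obtain ⟨i, -, rfl⟩ := Finset.mem_image.1 hk
    simpa [t', hf.extend_apply] using ht i
  rw [map_apply (by fun_prop) (.pi (Set.to_countable _) fun _ _ => ht _), hset,
    infinitePi_pi _ ht', Finset.prod_image hf.injOn]
  simp [t', hf.extend_apply]

theorem iidBool_eq_infinitePi (ι : Type*) [Countable ι] {p : ℝ}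
    (hp : p ∈ Set.Icc (0 : ℝ) 1) :
    iidBool ι p = infinitePi fun _ => Ber(true, false, ⟨p, hp⟩) :=
  (congrArg _ (map_bernDigits_restrict_Ico ⟨p, hp⟩)).trans
    (infinitePi_map_comp_of_injective _ (Countable.exists_injective_nat ι).choose_spec)

lemma infinitePi_pi_const_of_infinite {ι X : Type*} [MeasurableSpace X] (ν : Measure X)
    [IsProbabilityMeasure ν] {t : Set X} (ht : MeasurableSet t) (hνt : ν t < 1) {S : Set ι}
    (hS : S.Infinite) : infinitePi (fun _ : ι => ν) (S.pi fun _ => t) = 0 := by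
  refine le_antisymm (ge_of_tendsto' (ENNReal.tendsto_pow_atTop_nhds_zero_of_lt_one hνt)
    fun k => ?_) zero_le
  obtain ⟨F, hFS, rfl⟩ := hS.exists_subset_card_eq k
  calc infinitePi (fun _ : ι => ν) (S.pi fun _ => t)
      ≤ infinitePi (fun _ : ι => ν) ((F : Set ι).pi fun _ => t) :=
        measure_mono (Set.pi_mono' (fun _ _ => subset_rfl) hFS)
    _ = ν t ^ F.card := by rw [infinitePi_pi _ fun _ _ => ht, Finset.prod_const]

lemma ae_infinitePi_bernoulli_exists_eq_true {ι : Type*} {p : I} (hp : p ≠ 0) {S : Set ι}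
    (hS : S.Infinite) :
    ∀ᵐ ω ∂infinitePi (fun _ : ι => Ber(true, false, p)), ∃ i ∈ S, ω i = true := by
  rw [ae_iff]
  convert infinitePi_pi_const_of_infinite Ber(true, false, p) (.singleton false) ?_ hS using 2
  · ext ω
    simp
  · rw [bernoulliMeasure_apply_of_notMem_of_mem _ (.singleton _) (by simp) rfl,
      ← ENNReal.coe_one, ENNReal.coe_lt_coe, ← NNReal.coe_lt_coe]
    simpa using unitInterval.pos_iff_ne_zero.2 hp

lemma infinitePi_bernoulli_apply_eq_true {ι : Type*} (p : I) (i : ι) :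
    infinitePi (fun _ : ι => Ber(true, false, p)) {ω | ω i = true} = ENNReal.ofReal p := by
  change infinitePi _ ((fun ω : ι → Bool => ω i) ⁻¹' {true}) = _
  rw [(measurePreserving_eval_infinitePi _ i).measure_preimage
      (measurableSet_singleton true).nullMeasurableSet,
    bernoulliMeasure_apply_of_mem_of_notMem _ (.singleton _) rfl (by simp),
    ENNReal.ofReal_eq_coe_nnreal p.2.1]
  rfl

section Geometry

variable {d : ℕ}

def NearestOccupied (ω : SiteCfg d) (u : Site d) (i : Fin d) (a b : ℤ) : Prop :=
  a ≤ u i ∧ u i < b ∧ ω (seg u i a) = true ∧ ω (seg u i b) = true ∧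
    ∀ c, a < c → c < b → ω (seg u i c) = false

lemma NearestOccupied.unique {ω : SiteCfg d} {u : Site d} {i : Fin d} {a b a' b' : ℤ}
    (h : NearestOccupied ω u i a b) (h' : NearestOccupied ω u i a' b') : a = a' ∧ b = b' := by
  obtain ⟨ha, hb, hoa, hob, hgap⟩ := h
  obtain ⟨ha', hb', hoa', hob', hgap'⟩ := h'
  constructor
  · rcases lt_trichotomy a a' with hlt | he | hgt
    · exact absurd ((hgap a' hlt (by omega)).symm.trans hoa') Bool.false_ne_true
    · exact he
    · exact absurd ((hgap' a hgt (by omega)).symm.trans hoa) Bool.false_ne_true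
  · rcases lt_trichotomy b b' with hlt | he | hgt
    · exact absurd ((hgap' b (by omega) hlt).symm.trans hob) Bool.false_ne_true
    · exact he
    · exact absurd ((hgap b' (by omega) hgt).symm.trans hob') Bool.false_ne_true

lemma exists_nearestOccupied {ω : SiteCfg d} {u : Site d} {i : Fin d}
    (hle : ∃ c ≤ u i, ω (seg u i c) = true) (hgt : ∃ c > u i, ω (seg u i c) = true) :
    ∃ a b, NearestOccupied ω u i a b := by
  obtain ⟨a, ⟨ha, hoa⟩, hamax⟩ := Int.exists_greatest_of_bdd ⟨u i, fun c hc => hc.1⟩ hle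
  obtain ⟨b, ⟨hb, hob⟩, hbmin⟩ :=
    Int.exists_least_of_bdd ⟨u i + 1, fun c hc => hc.1⟩ hgt
  refine ⟨a, b, ha, hb, hoa, hob, fun c hac hcb => ?_⟩
  by_contra hc
  rw [Bool.not_eq_false] at hc
  rcases le_or_gt c (u i) with hcu | hcu
  · exact (hamax c ⟨hcu, hc⟩).not_gt hac
  · exact (hbmin c ⟨hcu, hc⟩).not_gt hcb

lemma seg_injective (u : Site d) (i : Fin d) : (seg u i).Injective := fun a b h => by
  simpa [seg] using congrFun h i

def CoveringPair (ω : SiteCfg d) (e : EdgeIdx d) (vw : Site d × Site d) : Prop :=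
  FeasiblePair ω vw.1 vw.2 ∧ EdgeOnSeg e vw.1 vw.2

lemma coveringPair_iff {ω : SiteCfg d} {e : EdgeIdx d} {vw : Site d × Site d} :
    CoveringPair ω e vw ↔
      ∃ a b, NearestOccupied ω e.1 e.2 a b ∧ vw = (seg e.1 e.2 a, seg e.1 e.2 b) := by
  obtain ⟨u, i⟩ := e
  obtain ⟨v, w⟩ := vw
  constructor
  · rintro ⟨⟨j, hagree, hlt, hov, how, hgap⟩, a, b, ha, hb, rfl, rfl⟩
    obtain rfl : j = i := by
      by_contra hji
      simp [seg, Function.update_of_ne hji] at hlt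
    refine ⟨a, b, ⟨ha, hb, hov, how, fun c hac hcb => ?_⟩, rfl⟩
    simpa [seg] using hgap c (by simpa [seg] using hac) (by simpa [seg] using hcb)
  · rintro ⟨a, b, ⟨ha, hb, hoa, hob, hgap⟩, hvw⟩
    obtain ⟨rfl, rfl⟩ := Prod.mk.inj hvw
    refine ⟨⟨i, fun j hj => by simp [seg, Function.update_of_ne hj],
      by simpa [seg] using ha.trans_lt hb, hoa, hob, fun c hac hcb => ?_⟩,
      a, b, ha, hb, rfl, rfl⟩
    simpa [seg] using hgap c (by simpa [seg] using hac) (by simpa [seg] using hcb)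

lemma measurableSet_setOf_coveringPair (e : EdgeIdx d) (vw : Site d × Site d) :
    MeasurableSet {ω : SiteCfg d | CoveringPair ω e vw} :=
  measurableSet_setOfPred.2 (by unfold CoveringPair FeasiblePair; fun_prop)

lemma pairwise_disjoint_coveringPair (e : EdgeIdx d) :
    Pairwise (Disjoint on fun vw => {ω : SiteCfg d | CoveringPair ω e vw}) := by
  refine fun vw vw' hne => Set.disjoint_left.2 fun ω h h' => hne ?_
  obtain ⟨a, b, hab, rfl⟩ := coveringPair_iff.1 h
  obtain ⟨a', b', hab', rfl⟩ := coveringPair_iff.1 h'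
  obtain ⟨rfl, rfl⟩ := hab.unique hab'
  rfl

lemma ae_exists_coveringPair {p : I} (hp : p ≠ 0) (e : EdgeIdx d) :
    ∀ᵐ ω ∂infinitePi (fun _ : Site d => Ber(true, false, p)),
      ∃ vw, CoveringPair ω e vw := by
  filter_upwards [ae_infinitePi_bernoulli_exists_eq_true hp
      ((Set.Iic_infinite (e.1 e.2)).image (seg_injective e.1 e.2).injOn),
    ae_infinitePi_bernoulli_exists_eq_true hp
      ((Set.Ioi_infinite (e.1 e.2)).image (seg_injective e.1 e.2).injOn)]
    with ω ⟨_, ⟨a, ha, rfl⟩, hoa⟩ ⟨_, ⟨b, hb, rfl⟩, hob⟩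
  obtain ⟨a, b, hab⟩ := exists_nearestOccupied ⟨a, ha, hoa⟩ ⟨b, hb, hob⟩
  exact ⟨_, coveringPair_iff.2 ⟨a, b, hab, rfl⟩⟩

lemma setOf_edgeOpen_eq_iUnion (e : EdgeIdx d) :
    {ξ : Cfg d | EdgeOpen ξ e} =
      ⋃ vw, {ω | CoveringPair ω e vw} ×ˢ {η : PairLabels d | η vw = true} := by
  ext ξ
  simp [EdgeOpen, CoveringPair, and_assoc]

end Geometry

lemma prod_iUnion_prod_of_ae_cover {ι α β : Type*} [Countable ι] [MeasurableSpace α]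
    [MeasurableSpace β] {μ : Measure α} {ν : Measure β} [IsProbabilityMeasure μ] [SFinite ν]
    {s : ι → Set α} {t : ι → Set β} {c : ℝ≥0∞} (hs : ∀ i, MeasurableSet (s i))
    (hd : Pairwise (Disjoint on s)) (hcover : ∀ᵐ a ∂μ, ∃ i, a ∈ s i)
    (ht : ∀ i, MeasurableSet (t i)) (hc : ∀ i, ν (t i) = c) :
    μ.prod ν (⋃ i, s i ×ˢ t i) = c := by
  have hU : μ (⋃ i, s i) = 1 := by
    rw [← prob_compl_eq_zero_iff (.iUnion hs)]
    simpa [ae_iff, Set.compl_def] using hcover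
  rw [measure_iUnion (fun i j hij => Set.disjoint_prod.2 (Or.inl (hd hij)))
    fun i => (hs i).prod (ht i)]
  simp_rw [Measure.prod_prod, hc]
  rw [ENNReal.tsum_mul_right, ← measure_iUnion hd hs, hU, one_mul]

theorem edge_marginal_general (d : ℕ) (p lam : ℝ) (hp : p ∈ Set.Ioc (0 : ℝ) 1)
    (hlam : lam ∈ Set.Icc (0 : ℝ) 1) (e : EdgeIdx d) :
    alignMeasure d p lam {ξ | EdgeOpen ξ e} = ENNReal.ofReal lam := by
  have hp' : p ∈ Set.Icc (0 : ℝ) 1 := Set.Ioc_subset_Icc_self hp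
  rw [alignMeasure, iidBool_eq_infinitePi _ hp', iidBool_eq_infinitePi _ hlam,
    setOf_edgeOpen_eq_iUnion]
  refine prod_iUnion_prod_of_ae_cover (measurableSet_setOf_coveringPair e)
    (pairwise_disjoint_coveringPair e) (ae_exists_coveringPair (fun h => ?_) e)
    (fun vw => measurableSet_eq_fun (measurable_pi_apply vw) measurable_const) fun vw => ?_
  · exact hp.1.ne' (congrArg Subtype.val h)
  · exact infinitePi_bernoulli_apply_eq_true _ vw

/-- Fix `d ≥ 2`, `p ∈ (0,1]`, `λ ∈ [0,1]`. The marginal probability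
that a given nearest-neighbour edge is open equals `λ`. -/
theorem edge_marginal (d : ℕ) (hd : 2 ≤ d) (p lam : ℝ) (hp : p ∈ Set.Ioc (0 : ℝ) 1)
    (hlam : lam ∈ Set.Icc (0 : ℝ) 1) (e : EdgeIdx d) :
    alignMeasure d p lam {ξ | EdgeOpen ξ e} = ENNReal.ofReal lam :=
  edge_marginal_general d p lam hp hlam e

end AlignmentPercolation
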